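/- Let P be a finite set of points in the plane in general position and let s, t ∈ P with sₓ < tₓ. Then the greedy procedure defining mpath(s,t) is well-defined at every step (the required neighbor n₀(z) or n₁(z) exists) and terminates, and the resulting path mpath(s,t) is a light path whose vertices have strictly increasing x-coordinates, joining s to a t-protected point w such that either w = t or wₓ > tₓ; moreover, every edge of mpath(s,t) is contained in S_t(s). -/
import Mathlib


open scoped BigOperators

/-- Euclidean distance between two points of the plane. -/
noncomputable def dist2 (p q : ℝ × ℝ) : ℝ := Real.sqrt ((p.1 - q.1) ^ 2 + (p.2 - q.2) ^ 2)

/-- `L₁` distance between two points of the plane. -/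
def dist1 (p q : ℝ × ℝ) : ℝ := |p.1 - q.1| + |p.2 - q.2|

/-- `L∞` distance between two points of the plane (half the side of `S_t(s)`). -/
def distInf (p q : ℝ × ℝ) : ℝ := max |p.1 - q.1| |p.2 - q.2|

/-- `cone i p q` : the point `q` lies in the open cone (quadrant) `C_i(p)`. -/
def cone (i : ℕ) (p q : ℝ × ℝ) : Prop :=
  if i = 0 then p.1 < q.1 ∧ q.2 < p.2
  else if i = 1 then p.1 < q.1 ∧ p.2 < q.2
  else if i = 2 then q.1 < p.1 ∧ p.2 < q.2
  else q.1 < p.1 ∧ q.2 < p.2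

/-- General position: no two points of `P` on a common vertical line, horizontal line,
or line of slope `+1` or `-1`. -/
def GenPos (P : Finset (ℝ × ℝ)) : Prop :=
  ∀ p ∈ P, ∀ q ∈ P, p ≠ q →
    p.1 ≠ q.1 ∧ p.2 ≠ q.2 ∧ p.2 - p.1 ≠ q.2 - q.1 ∧ p.2 + p.1 ≠ q.2 + q.1

/-- `IsNbr P i p q` : `q = n_i(p)`, i.e. `q` is a point of `P` in `C_i(p)` minimizing
the `L₁`-distance to `p`. -/
def IsNbr (P : Finset (ℝ × ℝ)) (i : ℕ) (p q : ℝ × ℝ) : Prop :=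
  q ∈ P ∧ cone i p q ∧ ∀ r ∈ P, cone i p r → dist1 p q ≤ dist1 p r

/-- Adjacency in the θ₄-graph of `P`. -/
def Theta4Adj (P : Finset (ℝ × ℝ)) (p q : ℝ × ℝ) : Prop :=
  p ∈ P ∧ q ∈ P ∧ ∃ i < 4, (IsNbr P i p q ∨ IsNbr P i q p)

/-- A walk with `k` edges in the θ₄-graph of `P`, given by its vertices `v 0, …, v k`. -/
def IsTheta4Path (P : Finset (ℝ × ℝ)) (k : ℕ) (v : ℕ → ℝ × ℝ) : Prop :=
  v 0 ∈ P ∧ ∀ j < k, Theta4Adj P (v j) (v (j + 1))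

/-- The Euclidean length of a path with `k` edges. -/
noncomputable def pathLength (k : ℕ) (v : ℕ → ℝ × ℝ) : ℝ :=
  ∑ j ∈ Finset.range k, dist2 (v j) (v (j + 1))

/-- `p` is `t`-protected: no point of `P` lying in `C₁(p)` is on or below the line `ℓ⁻_t`
of slope `-1` through `t`. -/
def TProtected (P : Finset (ℝ × ℝ)) (t p : ℝ × ℝ) : Prop :=
  ∀ q ∈ P, cone 1 p q → t.1 + t.2 < q.1 + q.2

/-- A path in the θ₄-graph that follows only `0`- and `1`-edges. -/
def FollowsZeroOne (P : Finset (ℝ × ℝ)) (k : ℕ) (v : ℕ → ℝ × ℝ) : Prop :=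
  v 0 ∈ P ∧ ∀ j < k, IsNbr P 0 (v j) (v (j + 1)) ∨ IsNbr P 1 (v j) (v (j + 1))

/-- A light path: it follows only `0`- and `1`-edges, and for every `0`-edge
`(v j, n₀(v j))`, no edge of the path crosses the horizontal ray emanating from `v j`
to the right. -/
def LightPath (P : Finset (ℝ × ℝ)) (k : ℕ) (v : ℕ → ℝ × ℝ) : Prop :=
  FollowsZeroOne P k v ∧
  ∀ j < k, IsNbr P 0 (v j) (v (j + 1)) →
    ∀ l < k, ∀ z ∈ segment ℝ (v l) (v (l + 1)), ¬ (z.2 = (v j).2 ∧ (v j).1 < z.1)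

/-- `IsMpath P s t k v` : `v 0, …, v k` is the greedy path `mpath(s,t)` : it starts at `s`,
at each step it moves to `n₀(z)` if the current point `z` is `t`-protected and to `n₁(z)`
otherwise, no intermediate point satisfies the stopping condition, and the final point is
either `t` or a `t`-protected point strictly to the right of `t`. -/
def IsMpath (P : Finset (ℝ × ℝ)) (s t : ℝ × ℝ) (k : ℕ) (v : ℕ → ℝ × ℝ) : Prop :=
  v 0 = s ∧
  (∀ j < k, (TProtected P t (v j) → IsNbr P 0 (v j) (v (j + 1))) ∧
            (¬ TProtected P t (v j) → IsNbr P 1 (v j) (v (j + 1)))) ∧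
  (∀ j < k, ¬ (v j = t ∨ (TProtected P t (v j) ∧ t.1 < (v j).1))) ∧
  (v k = t ∨ (TProtected P t (v k) ∧ t.1 < (v k).1))

section MpathAux

lemma cone0_iff (p q : ℝ × ℝ) : cone 0 p q ↔ p.1 < q.1 ∧ q.2 < p.2 := by simp [cone]

lemma cone1_iff (p q : ℝ × ℝ) : cone 1 p q ↔ p.1 < q.1 ∧ p.2 < q.2 := by simp [cone]

lemma dist1_cone0 {p q : ℝ × ℝ} (h : cone 0 p q) :
    dist1 p q = (q.1 - p.1) + (p.2 - q.2) := by
  rw [cone0_iff] at h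
  rw [dist1, abs_of_neg (by linarith), abs_of_pos (by linarith)]
  ring

lemma dist1_cone1 {p q : ℝ × ℝ} (h : cone 1 p q) :
    dist1 p q = (q.1 - p.1) + (q.2 - p.2) := by
  rw [cone1_iff] at h
  rw [dist1, abs_of_neg (by linarith), abs_of_neg (by linarith)]
  ring

lemma exists_isNbr {P : Finset (ℝ × ℝ)} {i : ℕ} {p : ℝ × ℝ}
    (h : ∃ q ∈ P, cone i p q) : ∃ w, IsNbr P i p w := by
  classical
  obtain ⟨q, hqP, hqc⟩ := h
  have hne : (P.filter (fun r => cone i p r)).Nonempty :=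
    ⟨q, Finset.mem_filter.2 ⟨hqP, hqc⟩⟩
  obtain ⟨w, hw, hmin⟩ := Finset.exists_min_image _ (fun r => dist1 p r) hne
  rw [Finset.mem_filter] at hw
  exact ⟨w, hw.1, hw.2, fun r hr hrc => hmin r (Finset.mem_filter.2 ⟨hr, hrc⟩)⟩

/-- The stopping condition of the greedy procedure. -/
def stopCond (P : Finset (ℝ × ℝ)) (t z : ℝ × ℝ) : Prop :=
  z = t ∨ (TProtected P t z ∧ t.1 < z.1)

open Classical in
/-- A choice of `nᵢ(z)` (arbitrary if none exists). -/
noncomputable def nbr (P : Finset (ℝ × ℝ)) (i : ℕ) (z : ℝ × ℝ) : ℝ × ℝ :=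
  if h : ∃ w, IsNbr P i z w then h.choose else z

lemma nbr_spec {P : Finset (ℝ × ℝ)} {i : ℕ} {z : ℝ × ℝ}
    (h : ∃ w, IsNbr P i z w) : IsNbr P i z (nbr P i z) := by
  rw [nbr, dif_pos h]
  exact h.choose_spec

open Classical in
/-- One greedy step of `mpath`. -/
noncomputable def mstep (P : Finset (ℝ × ℝ)) (t z : ℝ × ℝ) : ℝ × ℝ :=
  if stopCond P t z then z
  else if TProtected P t z then nbr P 0 z else nbr P 1 z

/-- The greedy sequence starting at `s`. -/
noncomputable def mseq (P : Finset (ℝ × ℝ)) (s t : ℝ × ℝ) : ℕ → ℝ × ℝ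
  | 0 => s
  | n + 1 => mstep P t (mseq P s t n)

lemma unprot_step (P : Finset (ℝ × ℝ)) (t : ℝ × ℝ) {z : ℝ × ℝ}
    (hnp : ¬ TProtected P t z) :
    IsNbr P 1 z (nbr P 1 z) ∧ z.1 < (nbr P 1 z).1 ∧ z.2 < (nbr P 1 z).2 ∧
      (nbr P 1 z).1 + (nbr P 1 z).2 ≤ t.1 + t.2 := by
  rw [TProtected] at hnp
  push_neg at hnp
  obtain ⟨q, hqP, hqc, hqle⟩ := hnp
  have hw := nbr_spec (exists_isNbr ⟨q, hqP, hqc⟩)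
  have hc := (cone1_iff _ _).1 hw.2.1
  have hc' := (cone1_iff _ _).1 hqc
  have h1 := hw.2.2 q hqP hqc
  rw [dist1_cone1 hw.2.1, dist1_cone1 hqc] at h1
  exact ⟨hw, hc.1, hc.2, by linarith⟩

lemma prot_step (P : Finset (ℝ × ℝ)) (hP : GenPos P) {t z : ℝ × ℝ} (ht : t ∈ P) (hz : z ∈ P)
    (hprot : TProtected P t z) (hns : ¬ stopCond P t z) :
    z.1 < t.1 ∧ t.2 < z.2 ∧ IsNbr P 0 z (nbr P 0 z) ∧
      z.1 < (nbr P 0 z).1 ∧ (nbr P 0 z).2 < z.2 ∧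
      dist1 z (nbr P 0 z) ≤ dist1 z t := by
  rw [stopCond] at hns
  push_neg at hns
  obtain ⟨hne, hns2⟩ := hns
  have hgp := hP z hz t ht hne
  have hx1 : z.1 < t.1 := lt_of_le_of_ne (hns2 hprot) hgp.1
  have hy : t.2 < z.2 := by
    rcases lt_trichotomy z.2 t.2 with h | h | h
    · exact absurd (hprot t ht ((cone1_iff _ _).2 ⟨hx1, h⟩)) (lt_irrefl _)
    · exact absurd h hgp.2.1
    · exact h
  have hct : cone 0 z t := (cone0_iff _ _).2 ⟨hx1, hy⟩
  have hw := nbr_spec (exists_isNbr ⟨t, ht, hct⟩)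
  have hc := (cone0_iff _ _).1 hw.2.1
  exact ⟨hx1, hy, hw, hc.1, hc.2, hw.2.2 t ht hct⟩

lemma mstep_bounds (P : Finset (ℝ × ℝ)) (hP : GenPos P) {t z : ℝ × ℝ} (ht : t ∈ P)
    (hz : z ∈ P) {d : ℝ} (h1 : |z.1 - t.1| ≤ d) (h2 : |z.2 - t.2| ≤ d)
    (hns : ¬ stopCond P t z) :
    mstep P t z ∈ P ∧ z.1 < (mstep P t z).1 ∧
      |(mstep P t z).1 - t.1| ≤ d ∧ |(mstep P t z).2 - t.2| ≤ d := by
  rw [abs_le] at h1 h2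
  rw [mstep, if_neg hns]
  by_cases hprot : TProtected P t z
  · rw [if_pos hprot]
    obtain ⟨hx1, hy, hw, hwx, hwy, hd⟩ := prot_step P hP ht hz hprot hns
    rw [dist1_cone0 hw.2.1, dist1_cone0 ((cone0_iff _ _).2 ⟨hx1, hy⟩)] at hd
    refine ⟨hw.1, hwx, ?_, ?_⟩ <;> rw [abs_le] <;> constructor <;> linarith
  · rw [if_neg hprot]
    obtain ⟨hw, hwx, hwy, hsum⟩ := unprot_step P t hprot
    refine ⟨hw.1, hwx, ?_, ?_⟩ <;> rw [abs_le] <;> constructor <;> linarith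

end MpathAux

/-- The greedy procedure defining `mpath(s,t)` is well-defined and terminates, and the
resulting path is a light, strictly `x`-monotone path joining `s` to a `t`-protected point
`w` with `w = t` or `wₓ > tₓ`, all of whose edges are contained in `S_t(s)`. -/
theorem mpath_exists (P : Finset (ℝ × ℝ)) (hP : GenPos P) (s t : ℝ × ℝ)
    (hs : s ∈ P) (ht : t ∈ P) (hx : s.1 < t.1) :
    ∃ (k : ℕ) (v : ℕ → ℝ × ℝ), IsMpath P s t k v ∧ LightPath P k v ∧
      (∀ j < k, (v j).1 < (v (j + 1)).1) ∧
      TProtected P t (v k) ∧ (v k = t ∨ t.1 < (v k).1) ∧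
      (∀ j < k, ∀ z ∈ segment ℝ (v j) (v (j + 1)),
        |z.1 - t.1| ≤ distInf s t ∧ |z.2 - t.2| ≤ distInf s t) := by
  classical
  set v : ℕ → ℝ × ℝ := mseq P s t with hvdef
  set d : ℝ := distInf s t with hddef
  have hv0 : v 0 = s := rfl
  have hvs : ∀ n, v (n + 1) = mstep P t (v n) := fun n => rfl
  have hds : |s.1 - t.1| ≤ d := le_max_left _ _
  have hds2 : |s.2 - t.2| ≤ d := le_max_right _ _
  have hgood : ∀ n, (∀ m, m < n → ¬ stopCond P t (v m)) →
      v n ∈ P ∧ |(v n).1 - t.1| ≤ d ∧ |(v n).2 - t.2| ≤ d := by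
    intro n
    induction n with
    | zero => intro _; exact ⟨hs, hds, hds2⟩
    | succ n IH =>
      intro h
      have hIH := IH (fun m hm => h m (Nat.lt_succ_of_lt hm))
      have hb := mstep_bounds P hP ht hIH.1 hIH.2.1 hIH.2.2 (h n (Nat.lt_succ_self n))
      rw [hvs n]
      exact ⟨hb.1, hb.2.2⟩
  have hterm : ∃ n, stopCond P t (v n) := by
    by_contra hcon
    push_neg at hcon
    have hstrict : ∀ a b, a < b → (v a).1 < (v b).1 := by
      intro a b hab
      induction b with
      | zero => omega
      | succ b IH =>
        have hgb := hgood b (fun m _ => hcon m)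
        have hbb := mstep_bounds P hP ht hgb.1 hgb.2.1 hgb.2.2 (hcon b)
        have hb : (v b).1 < (v (b + 1)).1 := by rw [hvs b]; exact hbb.2.1
        rcases Nat.lt_succ_iff_lt_or_eq.1 hab with h | h
        · exact (IH h).trans hb
        · subst h; exact hb
    have hinj : Set.InjOn v ↑(Finset.range (P.card + 1)) := by
      intro a _ b _ hab
      by_contra hne
      rcases lt_or_gt_of_ne hne with h | h
      · exact absurd (congrArg Prod.fst hab) (ne_of_lt (hstrict a b h))
      · exact absurd (congrArg Prod.fst hab).symm (ne_of_lt (hstrict b a h))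
    have hcard := Finset.card_le_card_of_injOn v
      (fun a _ => (hgood a fun m _ => hcon m).1) hinj
    simp [Finset.card_range] at hcard
  set k := Nat.find hterm with hkdef
  have hk : stopCond P t (v k) := Nat.find_spec hterm
  have hkmin : ∀ j, j < k → ¬ stopCond P t (v j) := fun j hj => Nat.find_min hterm hj
  have hgoodk : ∀ j, j ≤ k → v j ∈ P ∧ |(v j).1 - t.1| ≤ d ∧ |(v j).2 - t.2| ≤ d :=
    fun j hj => hgood j (fun m hm => hkmin m (lt_of_lt_of_le hm hj))
  have hedge : ∀ j, j < k →
      (TProtected P t (v j) → IsNbr P 0 (v j) (v (j + 1))) ∧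
      (¬ TProtected P t (v j) → IsNbr P 1 (v j) (v (j + 1))) := by
    intro j hj
    have hns := hkmin j hj
    have hzP := (hgoodk j hj.le).1
    constructor
    · intro hprot
      have hp := prot_step P hP ht hzP hprot hns
      rw [hvs j, mstep, if_neg hns, if_pos hprot]
      exact hp.2.2.1
    · intro hprot
      have hp := unprot_step P t hprot
      rw [hvs j, mstep, if_neg hns, if_neg hprot]
      exact hp.1
  have hxs : ∀ j, j < k → (v j).1 < (v (j + 1)).1 := by
    intro j hj
    have hg := hgoodk j hj.le
    have hb := mstep_bounds P hP ht hg.1 hg.2.1 hg.2.2 (hkmin j hj)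
    rw [hvs j]; exact hb.2.1
  have hchain : ∀ a b, a ≤ b → b ≤ k → (v a).1 ≤ (v b).1 := by
    intro a b hab
    induction b, hab using Nat.le_induction with
    | base => intro _; exact le_refl _
    | succ b hab IH =>
      intro hbk
      exact (IH (by omega)).trans (hxs b (by omega)).le
  have hbelow : ∀ j, j < k → TProtected P t (v j) →
      ∀ m, j + 1 ≤ m → m ≤ k → (v j).1 < (v m).1 ∧ (v m).2 < (v j).2 := by
    intro j hj hprot m hm
    induction m, hm using Nat.le_induction with
    | base =>
      intro _
      have h0 := (hedge j hj).1 hprot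
      have hc := (cone0_iff _ _).1 h0.2.1
      exact ⟨hc.1, hc.2⟩
    | succ m hm IH =>
      intro hmk
      have hmlt : m < k := by omega
      have hIH := IH hmlt.le
      have hns := hkmin m hmlt
      have hmP := (hgoodk m hmlt.le).1
      by_cases hpm : TProtected P t (v m)
      · have h0 := prot_step P hP ht hmP hpm hns
        rw [hvs m, mstep, if_neg hns, if_pos hpm]
        exact ⟨hIH.1.trans h0.2.2.2.1, h0.2.2.2.2.1.trans hIH.2⟩
      · have h1 := unprot_step P t hpm
        rw [hvs m, mstep, if_neg hns, if_neg hpm]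
        have hwx : (v j).1 < (nbr P 1 (v m)).1 := hIH.1.trans h1.2.1
        refine ⟨hwx, ?_⟩
        rcases lt_trichotomy (nbr P 1 (v m)).2 (v j).2 with h | h | h
        · exact h
        · exfalso
          have hne : v j ≠ nbr P 1 (v m) := by
            intro he; rw [he] at hwx; exact lt_irrefl _ hwx
          exact (hP (v j) (hgoodk j hj.le).1 _ h1.1.1 hne).2.1 h.symm
        · exfalso
          have hcw : cone 1 (v j) (nbr P 1 (v m)) := (cone1_iff _ _).2 ⟨hwx, h⟩
          have := hprot _ h1.1.1 hcw
          linarith [h1.2.2.2]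
  have hseg : ∀ (p q z : ℝ × ℝ), z ∈ segment ℝ p q →
      ∃ a b : ℝ, 0 ≤ a ∧ 0 ≤ b ∧ a + b = 1 ∧
        z.1 = a * p.1 + b * q.1 ∧ z.2 = a * p.2 + b * q.2 := by
    intro p q z hz
    obtain ⟨a, b, ha, hb, hab, hz⟩ := hz
    exact ⟨a, b, ha, hb, hab, by rw [← hz]; simp, by rw [← hz]; simp⟩
  have hkor : v k = t ∨ (TProtected P t (v k) ∧ t.1 < (v k).1) := hk
  have hprotk : TProtected P t (v k) := by
    rcases hkor with h | h
    · rw [h]; intro q hq hc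
      rw [cone1_iff] at hc
      linarith [hc.1, hc.2]
    · exact h.1
  have hlight : LightPath P k v := by
    constructor
    · refine ⟨hv0 ▸ hs, fun j hj => ?_⟩
      by_cases hp : TProtected P t (v j)
      · exact Or.inl ((hedge j hj).1 hp)
      · exact Or.inr ((hedge j hj).2 hp)
    · intro j hj h0 l hl z hz hcross
      obtain ⟨hz2, hz1⟩ := hcross
      have hprotj : TProtected P t (v j) := by
        by_contra hp
        have h1 := (hedge j hj).2 hp
        have hc0 := (cone0_iff _ _).1 h0.2.1
        have hc1 := (cone1_iff _ _).1 h1.2.1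
        linarith [hc0.2, hc1.2]
      obtain ⟨a, b, ha, hb, hab, hz1', hz2'⟩ := hseg _ _ _ hz
      rcases lt_trichotomy l j with hlj | hlj | hlj
      · have h1 : (v l).1 < (v (l + 1)).1 := hxs l hl
        have h2 : (v (l + 1)).1 ≤ (v j).1 := hchain (l + 1) j hlj hj.le
        have hexp : a * (v (l + 1)).1 + b * (v (l + 1)).1 = (v (l + 1)).1 := by
          rw [← add_mul, hab, one_mul]
        linarith [mul_le_mul_of_nonneg_left h1.le ha, hexp]
      · subst hlj
        have hc0 := (cone0_iff _ _).1 h0.2.1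
        have hexp : a * (v l).2 + b * (v l).2 = (v l).2 := by
          rw [← add_mul, hab, one_mul]
        have hb0 : b = 0 := by
          by_contra hb0
          have hbpos : 0 < b := lt_of_le_of_ne hb (Ne.symm hb0)
          have := mul_pos hbpos (sub_pos.2 hc0.2)
          nlinarith
        have ha1 : a = 1 := by linarith
        rw [hb0, ha1] at hz1'
        simp at hz1'
        linarith
      · have hbl := hbelow j hj hprotj l hlj hl.le
        have hbl1 := hbelow j hj hprotj (l + 1) (by omega) hl
        have hexp : a * (v j).2 + b * (v j).2 = (v j).2 := by
          rw [← add_mul, hab, one_mul]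
        rcases lt_or_ge 0 a with ha0 | ha0
        · have h1 := mul_pos ha0 (sub_pos.2 hbl.2)
          have h2 := mul_le_mul_of_nonneg_left hbl1.2.le hb
          nlinarith
        · have ha' : a = 0 := le_antisymm ha0 ha
          have hb' : b = 1 := by linarith
          rw [ha', hb'] at hz2'
          simp at hz2'
          linarith [hbl1.2]
  refine ⟨k, v, ⟨hv0, fun j hj => hedge j hj, fun j hj => hkmin j hj, hk⟩, hlight,
    hxs, hprotk, ?_, ?_⟩
  · rcases hkor with h | h
    · exact Or.inl h
    · exact Or.inr h.2
  · intro j hj z hz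
    obtain ⟨a, b, ha, hb, hab, h1', h2'⟩ := hseg _ _ _ hz
    obtain ⟨_, g11, g12⟩ := hgoodk j hj.le
    obtain ⟨_, g21, g22⟩ := hgoodk (j + 1) hj
    rw [abs_le] at g11 g12 g21 g22
    have he1 : a * t.1 + b * t.1 = t.1 := by rw [← add_mul, hab, one_mul]
    have he2 : a * t.2 + b * t.2 = t.2 := by rw [← add_mul, hab, one_mul]
    have he3 : a * d + b * d = d := by rw [← add_mul, hab, one_mul]
    constructor <;> rw [abs_le] <;> constructor
    · linarith [mul_le_mul_of_nonneg_left g11.1 ha, mul_le_mul_of_nonneg_left g21.1 hb]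
    · linarith [mul_le_mul_of_nonneg_left g11.2 ha, mul_le_mul_of_nonneg_left g21.2 hb]
    · linarith [mul_le_mul_of_nonneg_left g12.1 ha, mul_le_mul_of_nonneg_left g22.1 hb]
    · linarith [mul_le_mul_of_nonneg_left g12.2 ha, mul_le_mul_of_nonneg_left g22.2 hb]
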